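/- arXiv:2401.06912 — 4 statements merged into one kernel-verified Lean document; each statement's English description precedes it below -/
import Mathlib

section
/- For S = ⟨n₁, n₂, n₃⟩ and n ∈ S, the number of edges in the factorization support graph ∇_S(n) equals C(|Z_S(n)|,2) - |Z_{12}(n)||Z_3(n)| - |Z_{13}(n)||Z_2(n)| - |Z_{23}(n)||Z_1(n)| + |Z_1(n)||Z_2(n)| + |Z_1(n)||Z_3(n)| + |Z_2(n)||Z_3(n)|. -/
/-!
Two factorizations fail to be adjacent in `∇_S(n)` exactly when their supports are disjoint, so
it suffices to count the unordered pairs with disjoint supports and subtract them from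
`C(|Z_S(n)|, 2)`. Counting ordered pairs instead, a factorization with support `A` is paired with
the `|Z_{Aᶜ}(n)|` factorizations supported in the complement. Grouping by the exact support `A`
and writing `|Z_I(n)|` as the sum of the exact-support counts over `A ⊆ I` turns this into a
polynomial identity in the seven exact-support counts. For `n ≠ 0` no factorization has empty
support; for `n = 0` the only factorization is `0` and both sides vanish.
-/

open Finset

section SupportGraph

variable {α ι : Type*}

lemma two_mul_card_image_filter_offDiag [DecidableEq α] (s : Finset α) {r : α → α → Prop}
    [DecidableRel r] (hr : ∀ a b, r a b → r b a) :
    2 * #({p ∈ s.offDiag | r p.1 p.2}.image Sym2.mk.uncurry) = #{p ∈ s.offDiag | r p.1 p.2} := by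
  rw [card_eq_sum_card_image Sym2.mk.uncurry {p ∈ s.offDiag | r p.1 p.2}, mul_comm]
  refine (sum_const_nat fun e he => ?_).symm
  obtain ⟨⟨a, b⟩, hab, rfl⟩ := mem_image.1 he
  simp only [mem_filter, mem_offDiag] at hab
  have hfiber : {p ∈ {p ∈ s.offDiag | r p.1 p.2} | Sym2.mk.uncurry p = s(a, b)} =
      {(a, b), (b, a)} := by
    ext ⟨c, d⟩
    simp only [mem_filter, mem_offDiag, Function.uncurry_apply_pair, Sym2.eq_iff, mem_insert,
      mem_singleton, Prod.mk.injEq]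
    constructor
    · exact fun h => h.2
    · rintro (⟨rfl, rfl⟩ | ⟨rfl, rfl⟩)
      · exact ⟨hab, .inl ⟨rfl, rfl⟩⟩
      · exact ⟨⟨⟨hab.1.2.1, hab.1.1, Ne.symm hab.1.2.2⟩, hr _ _ hab.2⟩, .inr ⟨rfl, rfl⟩⟩
  rw [Function.uncurry_apply_pair, hfiber, card_pair fun h => hab.1.2.2 (Prod.ext_iff.1 h).1]

variable [DecidableEq ι]

/-- With `F = Z_S(n)` and `supp` the support of a factorization, this is `Z_I(n)`. -/
def supportedIn (F : Finset α) (supp : α → Finset ι) (I : Finset ι) : Finset α :=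
  {x ∈ F | supp x ⊆ I}

/-- The edge set of `∇_S(n)` when `F = Z_S(n)` and `supp` is the support of a factorization. -/
def supportGraphEdges [DecidableEq α] (F : Finset α) (supp : α → Finset ι) : Finset (Sym2 α) :=
  {p ∈ F.offDiag | ¬Disjoint (supp p.1) (supp p.2)}.image Sym2.mk.uncurry

variable (F : Finset α) (supp : α → Finset ι)

@[simp] lemma supportedIn_univ [Fintype ι] : supportedIn F supp univ = F :=
  filter_true_of_mem fun _ _ => subset_univ _

lemma coe_supportGraphEdges [DecidableEq α] : (supportGraphEdges F supp : Set (Sym2 α)) =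
    {e | ∃ x y, e = s(x, y) ∧ x ∈ F ∧ y ∈ F ∧ x ≠ y ∧ ¬Disjoint (supp x) (supp y)} := by
  ext e
  simp only [supportGraphEdges, coe_image, coe_filter, mem_offDiag, Set.mem_image,
    Set.mem_ofPred_eq, Prod.exists, Function.uncurry_apply_pair]
  constructor
  · rintro ⟨x, y, ⟨⟨hx, hy, hxy⟩, h⟩, rfl⟩
    exact ⟨x, y, rfl, hx, hy, hxy, h⟩
  · rintro ⟨x, y, rfl, hx, hy, hxy, h⟩
    exact ⟨x, y, ⟨⟨hx, hy, hxy⟩, h⟩, rfl⟩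

lemma card_supportedIn_eq_sum_powerset (I : Finset ι) :
    #(supportedIn F supp I) = ∑ A ∈ I.powerset, #{x ∈ F | supp x = A} := by
  rw [supportedIn, card_eq_sum_card_fiberwise (f := supp) (t := I.powerset)
    fun x hx => mem_powerset.2 (mem_filter.1 hx).2]
  refine sum_congr rfl fun A hA => congrArg card ?_
  rw [filter_filter]
  exact filter_congr fun x _ => ⟨fun h => h.2, fun h => ⟨h ▸ mem_powerset.1 hA, h⟩⟩

lemma card_filter_disjoint_product [Fintype ι] :
    #{p ∈ F ×ˢ F | Disjoint (supp p.1) (supp p.2)} =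
      ∑ A, #{x ∈ F | supp x = A} * #(supportedIn F supp Aᶜ) := by
  have hrow (x : α) :
      #{y ∈ F | Disjoint (supp x) (supp y)} = #(supportedIn F supp (supp x)ᶜ) := by
    simp only [supportedIn, subset_compl_iff_disjoint_left]
  rw [card_filter, sum_product]
  simp only [← card_filter, hrow]
  rw [← sum_fiberwise' F supp fun A => #(supportedIn F supp Aᶜ)]
  simp only [sum_const, smul_eq_mul]

lemma two_mul_card_supportGraphEdges_add [DecidableEq α] (hF : ∀ x ∈ F, (supp x).Nonempty) :
    2 * #(supportGraphEdges F supp) + #{p ∈ F ×ˢ F | Disjoint (supp p.1) (supp p.2)} =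
      #F.offDiag := by
  have hdisj : {p ∈ F.offDiag | Disjoint (supp p.1) (supp p.2)} =
      {p ∈ F ×ˢ F | Disjoint (supp p.1) (supp p.2)} := by
    ext ⟨x, y⟩
    simp only [mem_filter, mem_offDiag, mem_product]
    constructor
    · exact fun h => ⟨⟨h.1.1, h.1.2.1⟩, h.2⟩
    · rintro ⟨⟨hx, hy⟩, h⟩
      refine ⟨⟨hx, hy, ?_⟩, h⟩
      rintro rfl
      exact (hF x hx).ne_empty (disjoint_self.1 h)
  rw [supportGraphEdges, two_mul_card_image_filter_offDiag F
    (r := fun x y => ¬Disjoint (supp x) (supp y)) fun x y h => by rwa [disjoint_comm],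
    ← hdisj, add_comm, card_filter_add_card_filter_not]

end SupportGraph

section ThreeGenerators

lemma sum_fin_three_finset {R : Type*} [AddCommMonoid R] (f : Finset (Fin 3) → R) :
    ∑ A, f A = f ∅ + f {0} + f {1} + f {2} + f {0, 1} + f {0, 2} + f {1, 2} + f univ := by
  have hU : (univ : Finset (Finset (Fin 3))) =
      {∅, {0}, {1}, {2}, {0, 1}, {0, 2}, {1, 2}, univ} := by decide
  rw [hU]
  repeat rw [sum_insert (by decide)]
  rw [sum_singleton]
  abel

lemma sum_powerset_singleton {α R : Type*} [DecidableEq α] [AddCommMonoid R]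
    (f : Finset α → R) (a : α) : ∑ A ∈ ({a} : Finset α).powerset, f A = f ∅ + f {a} := by
  rw [← insert_empty, sum_powerset_insert (notMem_empty a)]
  simp

lemma sum_mul_compl_fin_three {R : Type*} [CommRing R] (g a : Finset (Fin 3) → R)
    (hg : g ∅ = 0) (ha : ∀ I, a I = ∑ A ∈ I.powerset, g A) :
    ∑ A, g A * a Aᶜ = 2 * (a {0, 1} * a {2} + a {0, 2} * a {1} + a {1, 2} * a {0}
      - a {0} * a {1} - a {0} * a {2} - a {1} * a {2}) := by
  have hempty : a ∅ = 0 := by simp [ha, hg]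
  have hsingle (i : Fin 3) : a {i} = g {i} := by simp [ha, sum_powerset_singleton, hg]
  have hpair (i j : Fin 3) (hij : i ≠ j) : a {i, j} = g {i, j} + g {i} + g {j} := by
    simp only [ha, sum_powerset_insert (notMem_singleton.2 hij), sum_powerset_singleton, hg,
      insert_empty]
    abel
  rw [sum_fin_three_finset]
  -- complements in `Finset (Fin 3)` reduce by `rfl`
  change g ∅ * a univ + g {0} * a {1, 2} + g {1} * a {0, 2} + g {2} * a {0, 1} + g {0, 1} * a {2}
    + g {0, 2} * a {1} + g {1, 2} * a {0} + g univ * a ∅ = _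
  rw [hempty, hg, hpair 0 1 (by decide), hpair 0 2 (by decide), hpair 1 2 (by decide), hsingle,
    hsingle, hsingle]
  ring

theorem card_supportGraphEdges_fin_three {α : Type*} [DecidableEq α] (F : Finset α)
    (supp : α → Finset (Fin 3)) (hF : ∀ x ∈ F, supp x = ∅ → F = {x}) :
    (#(supportGraphEdges F supp) : ℤ) = ((#F).choose 2 : ℤ)
      - #(supportedIn F supp {0, 1}) * #(supportedIn F supp {2})
      - #(supportedIn F supp {0, 2}) * #(supportedIn F supp {1})
      - #(supportedIn F supp {1, 2}) * #(supportedIn F supp {0})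
      + #(supportedIn F supp {0}) * #(supportedIn F supp {1})
      + #(supportedIn F supp {0}) * #(supportedIn F supp {2})
      + #(supportedIn F supp {1}) * #(supportedIn F supp {2}) := by
  by_cases hempty : ∃ x ∈ F, supp x = ∅
  · obtain ⟨x, hx, hx0⟩ := hempty
    obtain rfl := hF x hx hx0
    have hI (I : Finset (Fin 3)) : supportedIn {x} supp I = {x} :=
      filter_true_of_mem fun y hy => by simp [mem_singleton.1 hy, hx0]
    simp [hI, supportGraphEdges]
  have hne (x : α) (hx : x ∈ F) : (supp x).Nonempty :=
    nonempty_iff_ne_empty.2 fun h => hempty ⟨x, hx, h⟩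
  have hsum := sum_mul_compl_fin_three (fun A => (#{x ∈ F | supp x = A} : ℤ))
    (fun I => (#(supportedIn F supp I) : ℤ))
    (by rw [filter_eq_empty_iff.2 fun x hx h => hempty ⟨x, hx, h⟩, card_empty, Nat.cast_zero])
    fun I => by exact_mod_cast card_supportedIn_eq_sum_powerset F supp I
  have hedges := two_mul_card_supportGraphEdges_add F supp hne
  have hchoose : 2 * (#F).choose 2 = #F.offDiag := by
    rw [← Sym2.card_image_offDiag, Sym2.two_mul_card_image_offDiag]
  rw [card_filter_disjoint_product, ← hchoose] at hedges
  zify at hedges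
  linarith

end ThreeGenerators

section Factorizations

variable {ι : Type*} [Fintype ι] [DecidableEq ι] {d : ι → ℕ}

/-- The box `range (n + 1)` contains every factorization only when all generators are positive. -/
def factorizations (d : ι → ℕ) (n : ℕ) : Finset (ι → ℕ) :=
  {z ∈ Fintype.piFinset fun _ => range (n + 1) | ∑ i, z i * d i = n}

lemma mem_factorizations (hd : ∀ i, 0 < d i) {n : ℕ} {z : ι → ℕ} :
    z ∈ factorizations d n ↔ ∑ i, z i * d i = n := by
  refine ⟨fun h => (mem_filter.1 h).2, fun h => mem_filter.2 ⟨Fintype.mem_piFinset.2 fun i =>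
    mem_range_succ_iff.2 ?_, h⟩⟩
  calc z i ≤ z i * d i := Nat.le_mul_of_pos_right _ (hd i)
    _ ≤ ∑ j, z j * d j := single_le_sum (f := fun j => z j * d j) (fun _ _ => Nat.zero_le _)
        (mem_univ i)
    _ = n := h

lemma factorizations_zero (hd : ∀ i, 0 < d i) : factorizations d 0 = {0} := by
  ext z
  simp [mem_factorizations hd, sum_eq_zero_iff, funext_iff, (hd _).ne']

end Factorizations

theorem stmt5_general (n1 n2 n3 : ℕ) (hpos : 0 < n1 ∧ 0 < n2 ∧ 0 < n3)
    (n : ℕ)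
    (Z : Finset (Fin 3) → Set (Fin 3 → ℕ))
    (hZ : ∀ I, Z I = {z : Fin 3 → ℕ |
      z 0 * n1 + z 1 * n2 + z 2 * n3 = n ∧ ∀ i ∉ I, z i = 0}) :
    ({e : Sym2 (Fin 3 → ℕ) | ∃ z z', e = s(z, z') ∧
        z ∈ Z Finset.univ ∧ z' ∈ Z Finset.univ ∧ z ≠ z' ∧
        ∃ i, z i ≠ 0 ∧ z' i ≠ 0}.ncard : ℤ) =
      (((Z Finset.univ).ncard.choose 2 : ℤ)
        - (Z {0, 1}).ncard * (Z {2}).ncard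
        - (Z {0, 2}).ncard * (Z {1}).ncard
        - (Z {1, 2}).ncard * (Z {0}).ncard
        + (Z {0}).ncard * (Z {1}).ncard
        + (Z {0}).ncard * (Z {2}).ncard
        + (Z {1}).ncard * (Z {2}).ncard) := by
  classical
  have hd : ∀ i, 0 < ![n1, n2, n3] i := by simp [Fin.forall_fin_succ, hpos]
  set supp : (Fin 3 → ℕ) → Finset (Fin 3) := fun z => {i | z i ≠ 0}
  set F := factorizations ![n1, n2, n3] n
  have hZF : ∀ I, Z I = supportedIn F supp I := by
    intro I
    rw [hZ]
    ext z
    simp [supportedIn, F, mem_factorizations hd, Fin.sum_univ_three, supp, subset_iff,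
      not_imp_comm]
  have hcard := card_supportGraphEdges_fin_three F supp fun z hz hz0 => by
    obtain rfl : z = 0 := funext <| by simpa [supp] using filter_eq_empty_iff.1 hz0
    obtain rfl : n = 0 := by simpa using ((mem_factorizations hd).1 hz).symm
    exact factorizations_zero hd
  rw [← Set.ncard_coe_finset, coe_supportGraphEdges] at hcard
  simp only [hZF, Set.ncard_coe_finset, supportedIn_univ]
  convert hcard using 4
  simp [supp, not_disjoint_iff]

/-- for `S = ⟨n₁,n₂,n₃⟩`, the number of edges of `∇_S(n)` equals
`C(|Z_S(n)|,2) - |Z₁₂||Z₃| - |Z₁₃||Z₂| - |Z₂₃||Z₁| + |Z₁||Z₂| + |Z₁||Z₃| + |Z₂||Z₃|`. -/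
theorem stmt5 (n1 n2 n3 : ℕ) (hpos : 0 < n1 ∧ 0 < n2 ∧ 0 < n3)
    (hmin : ∀ i : Fin 3, ∀ z : Fin 3 → ℕ,
      (z 0 * n1 + z 1 * n2 + z 2 * n3 = ![n1, n2, n3] i) →
        z = fun j => if j = i then 1 else 0)
    (n : ℕ) (hn : ∃ z : Fin 3 → ℕ, z 0 * n1 + z 1 * n2 + z 2 * n3 = n)
    (Z : Finset (Fin 3) → Set (Fin 3 → ℕ))
    (hZ : ∀ I, Z I = {z : Fin 3 → ℕ |
      z 0 * n1 + z 1 * n2 + z 2 * n3 = n ∧ ∀ i ∉ I, z i = 0}) :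
    ({e : Sym2 (Fin 3 → ℕ) | ∃ z z', e = s(z, z') ∧
        z ∈ Z Finset.univ ∧ z' ∈ Z Finset.univ ∧ z ≠ z' ∧
        ∃ i, z i ≠ 0 ∧ z' i ≠ 0}.ncard : ℤ) =
      (((Z Finset.univ).ncard.choose 2 : ℤ)
        - (Z {0, 1}).ncard * (Z {2}).ncard
        - (Z {0, 2}).ncard * (Z {1}).ncard
        - (Z {1, 2}).ncard * (Z {0}).ncard
        + (Z {0}).ncard * (Z {1}).ncard
        + (Z {0}).ncard * (Z {2}).ncard
        + (Z {1}).ncard * (Z {2}).ncard) :=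
  stmt5_general n1 n2 n3 hpos n Z hZ
end

section
/- Let S = ⟨n₁,…,n_k⟩ be a numerical semigroup with factorization map φ, let n ∈ S, and let β ∈ S with n ≥ β. Fix a pair (t, t') ∈ ker φ with φ(t) = φ(t') = β and gcd(t,t') = 0. Then the map u ↦ (t + u, t' + u) is a bijection from Z_S(n - β) to the set of ordered pairs (z, z') ∈ Z_S(n)² whose direct trade is (t, t'). -/
/-!
Write g = gcd(z, z'). Every pair of factorizations splits as z = (z - g) + g, z' = (z' - g) + g,
so a pair with direct trade (t, t') is (t + g, t' + g). Conversely, since gcd(t, t') = 0 the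
gcd of (t + u, t' + u) is u, so its direct trade is (t, t'). Thus such pairs are determined by
their gcd u, and additivity of φ gives φ(u) = n - β.
-/

theorem Finset.sum_add_mul_distrib {ι R : Type*} [NonUnitalNonAssocSemiring R] (s : Finset ι)
    (f g w : ι → R) : ∑ j ∈ s, (f j + g j) * w j = ∑ j ∈ s, f j * w j + ∑ j ∈ s, g j * w j := by
  simp only [add_mul, Finset.sum_add_distrib]

theorem Nat.min_add_add_of_min_eq_zero {a b : ℕ} (h : min a b = 0) (c : ℕ) :
    min (a + c) (b + c) = c := by
  rw [min_add_add_right, h, zero_add]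

theorem stmt10_general (k : ℕ) (nn : Fin k → ℕ) (n β : ℕ) (hβn : β ≤ n)
    (t t' : Fin k → ℕ)
    (ht : ∑ j, t j * nn j = β) (ht' : ∑ j, t' j * nn j = β)
    (hgcd : ∀ j, min (t j) (t' j) = 0) :
    Set.BijOn (fun u : Fin k → ℕ => ((fun j => t j + u j), (fun j => t' j + u j)))
      {u : Fin k → ℕ | ∑ j, u j * nn j = n - β}
      {p : (Fin k → ℕ) × (Fin k → ℕ) |
        (∑ j, p.1 j * nn j = n) ∧ (∑ j, p.2 j * nn j = n) ∧
        (fun j => p.1 j - min (p.1 j) (p.2 j)) = t ∧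
        (fun j => p.2 j - min (p.1 j) (p.2 j)) = t'} := by
  refine ⟨fun u (hu : _ = _) => ?_, fun u _ v _ huv => ?_, ?_⟩
  · have hmin (j : Fin k) := Nat.min_add_add_of_min_eq_zero (hgcd j) (u j)
    refine ⟨?_, ?_, funext fun j => ?_, funext fun j => ?_⟩
    · rw [Finset.sum_add_mul_distrib, ht, hu, Nat.add_sub_cancel' hβn]
    · rw [Finset.sum_add_mul_distrib, ht', hu, Nat.add_sub_cancel' hβn]
    all_goals simp only [hmin, Nat.add_sub_cancel]
  · exact funext fun j => Nat.add_left_cancel (congrFun (congrArg Prod.fst huv) j)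
  · rintro ⟨z, z'⟩ ⟨hz, -, rfl, rfl⟩
    have hsplit : z = fun j => (z j - min (z j) (z' j)) + min (z j) (z' j) :=
      funext fun j => (Nat.sub_add_cancel (min_le_left _ _)).symm
    have hsplit' : z' = fun j => (z' j - min (z j) (z' j)) + min (z j) (z' j) :=
      funext fun j => (Nat.sub_add_cancel (min_le_right _ _)).symm
    refine ⟨fun j => min (z j) (z' j), ?_, Prod.ext hsplit.symm hsplit'.symm⟩
    rw [hsplit, Finset.sum_add_mul_distrib, ht] at hz
    exact Nat.eq_sub_of_add_eq' hz

/-- for a trade `(t,t')` with `φ(t) = φ(t') = β` and `gcd(t,t') = 0`, the map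
`u ↦ (t+u, t'+u)` is a bijection from `Z_S(n−β)` onto the ordered pairs of factorizations
of `n` whose direct trade is `(t,t')`. -/
theorem stmt10 (k : ℕ) (nn : Fin k → ℕ) (n β : ℕ) (hβn : β ≤ n)
    (hn : ∃ z : Fin k → ℕ, ∑ j, z j * nn j = n)
    (t t' : Fin k → ℕ)
    (ht : ∑ j, t j * nn j = β) (ht' : ∑ j, t' j * nn j = β)
    (hgcd : ∀ j, min (t j) (t' j) = 0) :
    Set.BijOn (fun u : Fin k → ℕ => ((fun j => t j + u j), (fun j => t' j + u j)))
      {u : Fin k → ℕ | ∑ j, u j * nn j = n - β}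
      {p : (Fin k → ℕ) × (Fin k → ℕ) |
        (∑ j, p.1 j * nn j = n) ∧ (∑ j, p.2 j * nn j = n) ∧
        (fun j => p.1 j - min (p.1 j) (p.2 j)) = t ∧
        (fun j => p.2 j - min (p.1 j) (p.2 j)) = t'} :=
  stmt10_general k nn n β hβn t t' ht ht' hgcd
end

section
/- For S = ⟨6, 9, 20⟩, the set ρ = {((3,0,0),(0,2,0)), ((4,4,0),(0,0,3))} is a presentation of S: any two factorizations of any n ∈ S are connected by a sequence of trades from ρ. -/
/-!
Trades preserve the factorization map, so they act within each fibre `Z(n)`. Using the first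
trade forwards and the second backwards, the potential `9 z₂ + z₀` strictly decreases, so every
factorization is connected to one with `z₀ < 3` and `z₂ < 3`. Such a factorization is
determined by `n`: `n ≡ 2 z₂ (mod 3)` fixes `z₂`, then `n - 20 z₂ ≡ 6 z₀ (mod 9)` fixes `z₀`,
and then `z₁`. Two factorizations of `n` are therefore connected through their common normal form.
-/

open Relation

theorem Relation.ReflTransGen.exists_fin_chain {α : Type*} {r : α → α → Prop} {a b : α}
    (h : ReflTransGen r a b) :
    ∃ (l : ℕ) (w : Fin (l + 1) → α),
      w 0 = a ∧ w (Fin.last l) = b ∧ ∀ i : Fin l, r (w i.castSucc) (w i.succ) := by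
  induction h with
  | refl => exact ⟨0, fun _ => a, rfl, rfl, fun i => i.elim0⟩
  | @tail b c _ hbc ih =>
    obtain ⟨l, w, hw0, hwl, hw⟩ := ih
    refine ⟨l + 1, Fin.snoc w c, ?_, Fin.snoc_last _ _, fun i => ?_⟩
    · rw [← Fin.castSucc_zero, Fin.snoc_castSucc, hw0]
    · induction i using Fin.lastCases with
      | last => rwa [Fin.succ_last, Fin.snoc_last, Fin.snoc_castSucc, hwl]
      | cast i => rw [Fin.succ_castSucc, Fin.snoc_castSucc, Fin.snoc_castSucc]; exact hw i

namespace Factorization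

variable {ι : Type*}

/-- The componentwise minimum `z ⊓ z'` is the gcd of factorizations. -/
def directTrade (z z' : ι → ℕ) : (ι → ℕ) × (ι → ℕ) :=
  (z - z ⊓ z', z' - z ⊓ z')

def TradeStep (ρ : Set ((ι → ℕ) × (ι → ℕ))) : (ι → ℕ) → (ι → ℕ) → Prop :=
  SymmGen fun z z' => directTrade z z' ∈ ρ

variable {ρ : Set ((ι → ℕ) × (ι → ℕ))}

instance : Std.Symm (TradeStep ρ) := inferInstanceAs (Std.Symm (SymmGen _))

theorem directTrade_swap (z z' : ι → ℕ) : directTrade z' z = (directTrade z z').swap := by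
  simp only [directTrade, inf_comm, Prod.swap_prod_mk]

theorem tradeStep_iff {z z' : ι → ℕ} :
    TradeStep ρ z z' ↔ directTrade z z' ∈ ρ ∨ (directTrade z z').swap ∈ ρ := by
  rw [TradeStep, SymmGen, directTrade_swap z z']

theorem directTrade_add_add (m a b : ι → ℕ) :
    directTrade (m + a) (m + b) = directTrade a b := by
  ext i <;> simp [directTrade, min_add_add_left, add_tsub_add_eq_tsub_left]

theorem directTrade_of_inf_eq_zero {a b : ι → ℕ} (h : a ⊓ b = 0) :
    directTrade a b = (a, b) := by
  simp [directTrade, h]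

theorem tradeStep_of_mem {a b : ι → ℕ} (hab : (a, b) ∈ ρ) (h : a ⊓ b = 0) :
    TradeStep ρ a b :=
  Or.inl (show directTrade a b ∈ ρ by rwa [directTrade_of_inf_eq_zero h])

theorem TradeStep.add_left {a b : ι → ℕ} (h : TradeStep ρ a b) (m : ι → ℕ) :
    TradeStep ρ (m + a) (m + b) := by
  rwa [tradeStep_iff, directTrade_add_add, ← tradeStep_iff]

theorem TradeStep.of_le {a b z : ι → ℕ} (h : TradeStep ρ a b) (hz : a ≤ z) :
    TradeStep ρ z (z - a + b) := by
  simpa only [tsub_add_cancel_of_le hz] using h.add_left (z - a)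

theorem map_eq_of_directTrade_mem {M : Type*} [AddCommMonoid M] (f : (ι → ℕ) →+ M)
    (hρ : ∀ p ∈ ρ, f p.1 = f p.2) {z z' : ι → ℕ} (h : directTrade z z' ∈ ρ) :
    f z = f z' := by
  calc f z = f (z - z ⊓ z') + f (z ⊓ z') := by
        rw [← map_add, tsub_add_cancel_of_le inf_le_left]
    _ = f (z' - z ⊓ z') + f (z ⊓ z') := congrArg (· + _) (hρ _ h)
    _ = f z' := by rw [← map_add, tsub_add_cancel_of_le inf_le_right]

theorem TradeStep.map_eq {M : Type*} [AddCommMonoid M] (f : (ι → ℕ) →+ M)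
    (hρ : ∀ p ∈ ρ, f p.1 = f p.2) {z z' : ι → ℕ} (h : TradeStep ρ z z') : f z = f z' :=
  h.elim (map_eq_of_directTrade_mem f hρ) fun h => (map_eq_of_directTrade_mem f hρ h).symm

theorem map_eq_of_reflTransGen {M : Type*} [AddCommMonoid M] (f : (ι → ℕ) →+ M)
    (hρ : ∀ p ∈ ρ, f p.1 = f p.2) {z z' : ι → ℕ} (h : ReflTransGen (TradeStep ρ) z z') :
    f z = f z' := by
  induction h with
  | refl => rfl
  | tail _ h ih => exact ih.trans (h.map_eq f hρ)

end Factorization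

open Factorization

def factor6920 : (Fin 3 → ℕ) →+ ℕ :=
  (Fintype.linearCombination ℕ ![6, 9, 20]).toAddMonoidHom

theorem factor6920_apply (z : Fin 3 → ℕ) : factor6920 z = 6 * z 0 + 9 * z 1 + 20 * z 2 := by
  simp [factor6920, Fintype.linearCombination_apply, Fin.sum_univ_three, mul_comm]

def trades6920 : Set ((Fin 3 → ℕ) × (Fin 3 → ℕ)) :=
  {(![3, 0, 0], ![0, 2, 0]), (![4, 4, 0], ![0, 0, 3])}

theorem factor6920_trades6920 : ∀ p ∈ trades6920, factor6920 p.1 = factor6920 p.2 := by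
  simp [trades6920, factor6920_apply]

theorem tradeStep_6920_fst : TradeStep trades6920 ![3, 0, 0] ![0, 2, 0] :=
  tradeStep_of_mem (by simp [trades6920]) (by decide)

theorem tradeStep_6920_snd : TradeStep trades6920 ![4, 4, 0] ![0, 0, 3] :=
  tradeStep_of_mem (by simp [trades6920]) (by decide)

theorem exists_normal_form_6920 (z : Fin 3 → ℕ) :
    ∃ u, ReflTransGen (TradeStep trades6920) z u ∧ u 0 < 3 ∧ u 2 < 3 := by
  induction hn : 9 * z 2 + z 0 using Nat.strong_induction_on generalizing z with
  | _ n ih =>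
  have descend {a b : Fin 3 → ℕ} (hab : TradeStep trades6920 a b) (ha : a ≤ z)
      (hlt : 9 * (z - a + b) 2 + (z - a + b) 0 < n) :
      ∃ u, ReflTransGen (TradeStep trades6920) z u ∧ u 0 < 3 ∧ u 2 < 3 := by
    obtain ⟨u, hu, hu0, hu2⟩ := ih _ hlt (z - a + b) rfl
    exact ⟨u, .head (hab.of_le ha) hu, hu0, hu2⟩
  by_cases h0 : 3 ≤ z 0
  · refine descend tradeStep_6920_fst (fun i => ?_) ?_
    · fin_cases i <;> simp [h0]
    · simp only [Pi.add_apply, Pi.sub_apply, Matrix.cons_val]; omega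
  by_cases h2 : 3 ≤ z 2
  · refine descend (symm tradeStep_6920_snd) (fun i => ?_) ?_
    · fin_cases i <;> simp [h2]
    · simp only [Pi.add_apply, Pi.sub_apply, Matrix.cons_val]; omega
  exact ⟨z, .refl, by omega, by omega⟩

theorem eq_of_factor6920_eq {u v : Fin 3 → ℕ} (h : factor6920 u = factor6920 v)
    (hu0 : u 0 < 3) (hu2 : u 2 < 3) (hv0 : v 0 < 3) (hv2 : v 2 < 3) : u = v := by
  rw [factor6920_apply, factor6920_apply] at h
  funext i; fin_cases i <;> simp <;> omega

theorem reflTransGen_tradeStep_6920 {z z' : Fin 3 → ℕ} (h : factor6920 z = factor6920 z') :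
    ReflTransGen (TradeStep trades6920) z z' := by
  have hinv {a b} (hab : ReflTransGen (TradeStep trades6920) a b) : factor6920 a = factor6920 b :=
    map_eq_of_reflTransGen factor6920 factor6920_trades6920 hab
  obtain ⟨u, hzu, hu0, hu2⟩ := exists_normal_form_6920 z
  obtain ⟨v, hz'v, hv0, hv2⟩ := exists_normal_form_6920 z'
  obtain rfl : u = v :=
    eq_of_factor6920_eq ((hinv hzu).symm.trans (h.trans (hinv hz'v))) hu0 hu2 hv0 hv2
  exact hzu.trans (symm hz'v)

/-- `ρ = {((3,0,0),(0,2,0)), ((4,4,0),(0,0,3))}` is a presentation of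
`S = ⟨6,9,20⟩`: any two factorizations of any element are connected by a sequence of
trades from `ρ`. -/
theorem stmt13 (φ : (Fin 3 → ℕ) → ℕ)
    (hφ : ∀ z, φ z = 6 * z 0 + 9 * z 1 + 20 * z 2) :
    ∀ z z' : Fin 3 → ℕ, φ z = φ z' →
      ∃ (l : ℕ) (w : Fin (l + 1) → (Fin 3 → ℕ)),
        w 0 = z ∧ w (Fin.last l) = z' ∧
        (∀ a : Fin (l + 1), φ (w a) = φ z) ∧
        (∀ a : Fin l,
          ((fun j => w a.castSucc j - min (w a.castSucc j) (w a.succ j)) = ![3, 0, 0] ∧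
            (fun j => w a.succ j - min (w a.castSucc j) (w a.succ j)) = ![0, 2, 0]) ∨
          ((fun j => w a.castSucc j - min (w a.castSucc j) (w a.succ j)) = ![0, 2, 0] ∧
            (fun j => w a.succ j - min (w a.castSucc j) (w a.succ j)) = ![3, 0, 0]) ∨
          ((fun j => w a.castSucc j - min (w a.castSucc j) (w a.succ j)) = ![4, 4, 0] ∧
            (fun j => w a.succ j - min (w a.castSucc j) (w a.succ j)) = ![0, 0, 3]) ∨
          ((fun j => w a.castSucc j - min (w a.castSucc j) (w a.succ j)) = ![0, 0, 3] ∧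
            (fun j => w a.succ j - min (w a.castSucc j) (w a.succ j)) = ![4, 4, 0])) := by
  obtain rfl : φ = factor6920 := funext fun z => (hφ z).trans (factor6920_apply z).symm
  intro z z' h
  obtain ⟨l, w, hw0, hwl, hw⟩ := (reflTransGen_tradeStep_6920 h).exists_fin_chain
  have hinv (i : Fin (l + 1)) : factor6920 (w i) = factor6920 z := by
    induction i using Fin.induction with
    | zero => rw [hw0]
    | succ i ih => exact ((hw i).map_eq factor6920 factor6920_trades6920).symm.trans ih
  refine ⟨l, w, hw0, hwl, hinv, fun i => ?_⟩
  have hi := tradeStep_iff.mp (hw i)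
  simp only [directTrade, Prod.swap_prod_mk, trades6920, Set.mem_insert_iff,
    Set.mem_singleton_iff, Prod.mk.injEq] at hi
  tauto
end

section
/- For distinct m, n ∈ [k], the principal order ideal in the ordered poset of disjoint supports P_k generated by the maximal element ({m},{n}) — that is, the set {(I,J) : I,J ⊆ [k] nonempty proper disjoint, m ∈ I, n ∈ J} ∪ {0̂} — is isomorphic as a poset to the face lattice of the (k−2)-dimensional cube. -/
/-!
Let `S = [k] \ {m, n}`, a set with `k - 2` elements. In an element `(I, J)` of the ideal, `m ∈ I`
and `n ∈ J`, so disjointness forces `n ∉ I` and `m ∉ J`; hence `(I, J)` is determined by the traces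
`(I ∩ S, J ∩ S)`, which form an arbitrary pair of disjoint subsets of `S`, i.e. a face of the cube
`[0,1]^S`. Inclusions between the `I`'s (and between the `J`'s) are read off from the traces,
because all these sets agree at `m` and `n`.
-/

/-- The principal ideal of the ordered poset of disjoint supports `P_k` generated by the
maximal element `({m},{n})`: ordered pairs `(I,J)` of nonempty, proper, disjoint subsets
of `[k]` with `m ∈ I` and `n ∈ J`, together with the bottom element `0̂` (`none`). -/
def PrincipalIdealDS (k : ℕ) (m n : Fin k) :=
  Option {p : Finset (Fin k) × Finset (Fin k) //
    p.1.Nonempty ∧ p.2.Nonempty ∧ p.1 ≠ Finset.univ ∧ p.2 ≠ Finset.univ ∧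
      Disjoint p.1 p.2 ∧ m ∈ p.1 ∧ n ∈ p.2}

/-- The order on the principal ideal: `0̂` is minimum, and `(R,T) ≼ (I,J)` when `I ⊆ R`
and `J ⊆ T`. -/
def leDS {k : ℕ} {m n : Fin k} : PrincipalIdealDS k m n → PrincipalIdealDS k m n → Prop
  | none, _ => True
  | some _, none => False
  | some p, some q => q.1.1 ⊆ p.1.1 ∧ q.1.2 ⊆ p.1.2

/-- The face lattice of the `d`-cube: a face is a pair `(A,B)` of disjoint subsets of `[d]`
(the coordinates fixed to `0` and to `1` respectively), plus a bottom element (`none`) for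
the empty face. -/
def CubeFaceLattice (d : ℕ) :=
  Option {p : Finset (Fin d) × Finset (Fin d) // Disjoint p.1 p.2}

/-- The order on cube faces: the empty face is minimum, and a face is contained in another
when it fixes more coordinates. -/
def leCube {d : ℕ} : CubeFaceLattice d → CubeFaceLattice d → Prop
  | none, _ => True
  | some _, none => False
  | some p, some q => q.1.1 ⊆ p.1.1 ∧ q.1.2 ⊆ p.1.2

open Finset

section PreimageEmbedding

variable {α β : Type*} {g : β ↪ α} {x : α}

theorem Finset.preimage_insert_map [DecidableEq α] (hx : x ∉ Set.range g) (A : Finset β) :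
    (insert x (A.map g)).preimage g g.injective.injOn = A := by
  ext a
  simp only [mem_preimage, mem_insert, mem_map']
  exact or_iff_right fun h => hx ⟨a, h⟩

theorem Finset.insert_map_preimage [DecidableEq α] {I : Finset α} (hx : x ∈ I)
    (hI : (I : Set α) ⊆ insert x (Set.range g)) :
    insert x ((I.preimage g g.injective.injOn).map g) = I := by
  ext y
  simp only [mem_insert, mem_map, mem_preimage]
  constructor
  · rintro (rfl | ⟨a, ha, rfl⟩)
    exacts [hx, ha]
  · intro hy
    obtain rfl | ⟨a, rfl⟩ := hI hy
    exacts [Or.inl rfl, Or.inr ⟨a, hy, rfl⟩]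

theorem Finset.preimage_subset_preimage_iff {I J : Finset α} (hx : x ∈ I)
    (hJ : (J : Set α) ⊆ insert x (Set.range g)) :
    J.preimage g g.injective.injOn ⊆ I.preimage g g.injective.injOn ↔ J ⊆ I := by
  refine ⟨fun h y hy => ?_, fun h => monotone_preimage g.injective h⟩
  obtain rfl | ⟨a, rfl⟩ := hJ hy
  · exact hx
  · exact mem_preimage.1 (h (mem_preimage.2 hy))

theorem Finset.notMem_map_of_notMem_range {y : α} (hy : y ∉ Set.range g) (A : Finset β) :
    y ∉ A.map g := fun h =>
  let ⟨a, _, ha⟩ := mem_map.1 h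
  hy ⟨a, ha⟩

theorem Finset.coe_subset_insert_range {z : α} (hg : Set.range g = {x, z}ᶜ) {I : Finset α}
    (hz : z ∉ I) : (I : Set α) ⊆ insert x (Set.range g) := by
  intro y hy
  rw [hg, Set.mem_insert_iff, Set.mem_compl_iff, Set.mem_insert_iff, Set.mem_singleton_iff]
  rcases eq_or_ne y z with rfl | hyz
  · exact absurd hy hz
  · tauto

end PreimageEmbedding

section DisjointSupports

variable {α β : Type*} [Fintype α]

/-- `PrincipalIdealDS k m n` is `Option (PrincipalIdealPair (Fin k) m n)`, with `none` as `0̂`. -/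
abbrev PrincipalIdealPair (α : Type*) [Fintype α] (m n : α) :=
  {p : Finset α × Finset α //
    p.1.Nonempty ∧ p.2.Nonempty ∧ p.1 ≠ univ ∧ p.2 ≠ univ ∧ Disjoint p.1 p.2 ∧ m ∈ p.1 ∧ n ∈ p.2}

abbrev CubeFace (β : Type*) := {q : Finset β × Finset β // Disjoint q.1 q.2}

theorem principalIdealPair_pred_iff {m n : α} {I J : Finset α} :
    (I.Nonempty ∧ J.Nonempty ∧ I ≠ univ ∧ J ≠ univ ∧ Disjoint I J ∧ m ∈ I ∧ n ∈ J) ↔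
      Disjoint I J ∧ m ∈ I ∧ n ∈ J := by
  refine ⟨fun h => h.2.2.2.2, fun ⟨hIJ, hm, hn⟩ => ⟨⟨m, hm⟩, ⟨n, hn⟩, ?_, ?_, hIJ, hm, hn⟩⟩
  · exact (ne_of_mem_of_not_mem' (mem_univ n) (disjoint_right.1 hIJ hn)).symm
  · exact (ne_of_mem_of_not_mem' (mem_univ m) (disjoint_left.1 hIJ hm)).symm

variable {g : β ↪ α} {m n : α}

namespace PrincipalIdealPair

variable (p : PrincipalIdealPair α m n)

theorem disjoint : Disjoint p.1.1 p.1.2 := (principalIdealPair_pred_iff.1 p.2).1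

theorem mem_fst : m ∈ p.1.1 := (principalIdealPair_pred_iff.1 p.2).2.1

theorem mem_snd : n ∈ p.1.2 := (principalIdealPair_pred_iff.1 p.2).2.2

theorem coe_fst_subset (hg : Set.range g = {m, n}ᶜ) : (p.1.1 : Set α) ⊆ insert m (Set.range g) :=
  coe_subset_insert_range hg (disjoint_right.1 p.disjoint p.mem_snd)

theorem coe_snd_subset (hg : Set.range g = {m, n}ᶜ) : (p.1.2 : Set α) ⊆ insert n (Set.range g) :=
  coe_subset_insert_range (hg.trans (by rw [Set.pair_comm])) (disjoint_left.1 p.disjoint p.mem_fst)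

variable [DecidableEq α]

noncomputable def equivCubeFace (hmn : m ≠ n) (hg : Set.range g = {m, n}ᶜ) :
    PrincipalIdealPair α m n ≃ CubeFace β where
  toFun p := ⟨(p.1.1.preimage g g.injective.injOn, p.1.2.preimage g g.injective.injOn),
    disjoint_preimage (hs := g.injective.injOn) (ht := g.injective.injOn) p.disjoint⟩
  invFun q := ⟨(insert m (q.1.1.map g), insert n (q.1.2.map g)), by
    have hm : m ∉ Set.range g := by simp [hg]
    have hn : n ∉ Set.range g := by simp [hg]
    refine principalIdealPair_pred_iff.2 ⟨?_, mem_insert_self _ _, mem_insert_self _ _⟩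
    rw [disjoint_insert_left, disjoint_insert_right, disjoint_map, mem_insert, not_or]
    exact ⟨⟨hmn, notMem_map_of_notMem_range hm _⟩, notMem_map_of_notMem_range hn _, q.2⟩⟩
  left_inv p := by
    apply Subtype.ext
    exact Prod.ext (insert_map_preimage p.mem_fst (p.coe_fst_subset hg))
      (insert_map_preimage p.mem_snd (p.coe_snd_subset hg))
  right_inv q := by
    apply Subtype.ext
    exact Prod.ext (preimage_insert_map (by simp [hg]) _) (preimage_insert_map (by simp [hg]) _)

theorem subset_iff_equivCubeFace_subset (hmn : m ≠ n) (hg : Set.range g = {m, n}ᶜ)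
    (q : PrincipalIdealPair α m n) :
    q.1.1 ⊆ p.1.1 ∧ q.1.2 ⊆ p.1.2 ↔
      (equivCubeFace hmn hg q).1.1 ⊆ (equivCubeFace hmn hg p).1.1 ∧
        (equivCubeFace hmn hg q).1.2 ⊆ (equivCubeFace hmn hg p).1.2 := by
  simp only [equivCubeFace]
  exact Iff.symm <| and_congr (preimage_subset_preimage_iff p.mem_fst (q.coe_fst_subset hg))
    (preimage_subset_preimage_iff p.mem_snd (q.coe_snd_subset hg))

end PrincipalIdealPair

end DisjointSupports

theorem exists_embedding_fin_range_eq_compl_pair {k : ℕ} {m n : Fin k} (hmn : m ≠ n) :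
    ∃ g : Fin (k - 2) ↪ Fin k, Set.range g = {m, n}ᶜ := by
  have hcard : ({m, n}ᶜ : Finset (Fin k)).card = k - 2 := by
    rw [card_compl, card_pair hmn, Fintype.card_fin]
  refine ⟨(orderEmbOfFin _ hcard).toEmbedding, ?_⟩
  have := range_orderEmbOfFin _ hcard
  rwa [coe_compl, coe_insert, coe_singleton] at this

/-- for distinct `m, n ∈ [k]`, the principal ideal of `P_k` generated by
`({m},{n})` is isomorphic as a poset to the face lattice of the `(k−2)`-cube. -/
theorem stmt16 (k : ℕ) (m n : Fin k) (hmn : m ≠ n) :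
    ∃ f : PrincipalIdealDS k m n ≃ CubeFaceLattice (k - 2),
      ∀ x y, leDS x y ↔ leCube (f x) (f y) := by
  obtain ⟨g, hg⟩ := exists_embedding_fin_range_eq_compl_pair hmn
  refine ⟨(PrincipalIdealPair.equivCubeFace hmn hg).optionCongr, ?_⟩
  rintro (_ | p) (_ | q)
  · exact Iff.rfl
  · exact Iff.rfl
  · exact Iff.rfl
  · exact PrincipalIdealPair.subset_iff_equivCubeFace_subset p hmn hg q
end
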